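/- arXiv:math/0307080 — 5 statements merged into one kernel-verified Lean document; each statement's English description precedes it below -/
import Mathlib

section
/- Let f : A → B and g : B → C be ring homomorphisms of finite type between locally Noetherian rings. If g ∘ f is étale and f is unramified, then g is étale. -/
universe u

theorem stmt_9_general (A B C : Type u) [CommRing A] [CommRing B] [CommRing C]
    [IsNoetherianRing B]
    [Algebra A B] [Algebra B C] [Algebra A C] [IsScalarTower A B C]
    [Algebra.FiniteType B C]
    (hAC : Algebra.Etale A C) (hAB : Algebra.Unramified A B) :
    Algebra.Etale B C := by
  have := hAC.formallyEtale
  have := hAB.formallyUnramified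
  exact
    { formallyEtale := .of_restrictScalars (R := A)
      finitePresentation := Algebra.FinitePresentation.of_finiteType.mp ‹_› }

theorem stmt_9 (A B C : Type u) [CommRing A] [CommRing B] [CommRing C]
    [IsNoetherianRing A] [IsNoetherianRing B] [IsNoetherianRing C]
    [Algebra A B] [Algebra B C] [Algebra A C] [IsScalarTower A B C]
    [Algebra.FiniteType A B] [Algebra.FiniteType B C]
    (hAC : Algebra.Etale A C) (hAB : Algebra.Unramified A B) :
    Algebra.Etale B C :=
  stmt_9_general A B C hAC hAB
end

section
/- Let k be a field, S = k[Y_1, …, Y_n] a polynomial ring, and T a finitely generated flat extension domain of S with T^× = k^×. Then for every height-one prime p of S and every S-algebra T' isomorphic to T, one has pT' ≠ T'; consequently, for the tensor product T^# = T^{σ_1} ⊗_S ⋯ ⊗_S T^{σ_ℓ} of finitely many such algebras, pT^# ≠ T^# for all height-one primes p of S. -/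
open scoped TensorProduct PiTensorProduct

universe u

/-- Core lemma: `p T ≠ T` for `T` itself. -/
theorem stmt_14_core (k : Type u) [Field k] (n : ℕ)
    (T : Type u) [CommRing T] [IsDomain T]
    [Algebra (MvPolynomial (Fin n) k) T]
    (hinj : Function.Injective (algebraMap (MvPolynomial (Fin n) k) T))
    [Algebra k T] [IsScalarTower k (MvPolynomial (Fin n) k) T]
    (hunits : ∀ t : T, IsUnit t → ∃ c : k, algebraMap k T c = t)
    (p : PrimeSpectrum (MvPolynomial (Fin n) k)) (hp : Order.height p = 1) :
    Ideal.map (algebraMap (MvPolynomial (Fin n) k) T) p.asIdeal ≠ ⊤ := by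
  set S := MvPolynomial (Fin n) k
  -- p is nonzero
  have hpne : p.asIdeal ≠ ⊥ := by
    intro h
    have hmin : IsMin p := by
      intro r hr
      rw [← PrimeSpectrum.asIdeal_le_asIdeal, h]
      exact bot_le
    rw [Order.height_eq_zero.mpr hmin] at hp
    exact zero_ne_one hp
  -- get a prime element f ∈ p
  obtain ⟨f, hfp, hf⟩ := p.isPrime.exists_mem_prime_of_ne_bot hpne
  -- q = (f) is prime
  have hq : (Ideal.span {f}).IsPrime := (Ideal.span_singleton_prime hf.ne_zero).mpr hf
  set q : PrimeSpectrum S := ⟨Ideal.span {f}, hq⟩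
  have hqbot : (⟨⊥, Ideal.bot_prime⟩ : PrimeSpectrum S) < q := by
    rw [← PrimeSpectrum.asIdeal_lt_asIdeal]
    refine lt_of_le_of_ne bot_le ?_
    intro h
    exact hf.ne_zero (Ideal.span_singleton_eq_bot.mp h.symm)
  have hqp : q ≤ p := by
    rw [← PrimeSpectrum.asIdeal_le_asIdeal]
    exact (Ideal.span_singleton_le_iff_mem _).mpr hfp
  -- q = p by height 1
  have hqeq : q = p := by
    by_contra hne
    have hlt : q < p := lt_of_le_of_ne hqp hne
    have hfin : Order.height q < ⊤ :=
      lt_of_le_of_lt (hp ▸ Order.height_mono hqp) (lt_top_iff_ne_top.mpr (by simp))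
    have h2 := Order.height_strictMono hlt hfin
    rw [hp] at h2
    have h0 : Order.height q = 0 := ENat.lt_one_iff_eq_zero.mp h2
    exact absurd hqbot ((Order.height_eq_zero.mp h0) hqbot.le).not_gt
  -- suppose pT = ⊤
  intro htop
  rw [← hqeq] at htop
  have h3 : Ideal.map (algebraMap S T) (Ideal.span {f}) = ⊤ := htop
  rw [Ideal.map_span, Set.image_singleton, Ideal.span_singleton_eq_top] at h3
  obtain ⟨c, hc⟩ := hunits _ h3
  rw [IsScalarTower.algebraMap_eq k S T] at hc
  have hfc : f = MvPolynomial.C c := by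
    apply hinj
    rw [← hc]
    rfl
  rcases eq_or_ne c 0 with h0 | h0
  · rw [h0] at hfc; simp at hfc; exact hf.ne_zero hfc
  · exact hf.not_unit (hfc ▸ (IsUnit.map MvPolynomial.C (isUnit_iff_ne_zero.mpr h0)))

theorem stmt_14 (k : Type u) [Field k] (n : ℕ)
    (T : Type u) [CommRing T] [IsDomain T]
    [Algebra (MvPolynomial (Fin n) k) T]
    (hinj : Function.Injective (algebraMap (MvPolynomial (Fin n) k) T))
    [Algebra.FiniteType (MvPolynomial (Fin n) k) T]
    [Module.Flat (MvPolynomial (Fin n) k) T]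
    [Algebra k T] [IsScalarTower k (MvPolynomial (Fin n) k) T]
    (hunits : ∀ t : T, IsUnit t → ∃ c : k, algebraMap k T c = t)
    (p : PrimeSpectrum (MvPolynomial (Fin n) k)) (hp : Order.height p = 1) :
    (∀ (T' : Type u) [CommRing T'] [Algebra (MvPolynomial (Fin n) k) T'],
      Nonempty (T ≃ₐ[MvPolynomial (Fin n) k] T') →
      Ideal.map (algebraMap (MvPolynomial (Fin n) k) T') p.asIdeal ≠ ⊤) ∧
    (∀ (ℓ : ℕ) (Tf : Fin ℓ → Type u) [∀ i, CommRing (Tf i)]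
      [∀ i, Algebra (MvPolynomial (Fin n) k) (Tf i)],
      (∀ i, Nonempty (T ≃ₐ[MvPolynomial (Fin n) k] Tf i)) →
      Ideal.map (algebraMap (MvPolynomial (Fin n) k)
        (⨂[MvPolynomial (Fin n) k] i, Tf i)) p.asIdeal ≠ ⊤) := by
  set S := MvPolynomial (Fin n) k with hS
  have hcore : Ideal.map (algebraMap S T) p.asIdeal ≠ ⊤ :=
    stmt_14_core k n T hinj hunits p hp
  constructor
  · intro T' _ _ he htop
    obtain ⟨e⟩ := he
    apply hcore
    have key : Ideal.map (↑(e.symm.toAlgHom) : T' →+* T)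
        (Ideal.map (algebraMap S T') p.asIdeal) = ⊤ := by
      rw [htop, Ideal.map_top]
    rwa [Ideal.map_map, e.symm.toAlgHom.comp_algebraMap] at key
  · intro ℓ Tf _ _ hiso htop
    -- choose maximal ideal m ⊇ pT
    obtain ⟨m, hm, hpm⟩ := Ideal.exists_le_maximal _ hcore
    -- algebra maps Tf i → T ⧸ m
    have e : ∀ i, T ≃ₐ[S] Tf i := fun i => (hiso i).some
    let g : ∀ i, Tf i →ₐ[S] T ⧸ m := fun i =>
      (Ideal.Quotient.mkₐ S m).comp (e i).symm.toAlgHom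
    -- lift to an algebra map from the tensor product
    let f : MultilinearMap S Tf (T ⧸ m) :=
      (MultilinearMap.mkPiAlgebra S (Fin ℓ) (T ⧸ m)).compLinearMap
        (fun i => (g i).toLinearMap)
    have hone : f 1 = 1 := by simp [f]
    have hmul : ∀ x y, f (x * y) = f x * f y := by
      intro x y
      simp [f, Finset.prod_mul_distrib]
    let φ : (⨂[S] i, Tf i) →ₐ[S] T ⧸ m := PiTensorProduct.liftAlgHom f hone hmul
    -- transport ⊤ along φ
    have h1 : Ideal.map (algebraMap S (T ⧸ m)) p.asIdeal = ⊤ := by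
      rw [← φ.comp_algebraMap, ← Ideal.map_map, htop, Ideal.map_top]
    -- but p maps to zero in T ⧸ m
    have h2 : Ideal.map (algebraMap S (T ⧸ m)) p.asIdeal ≤ ⊥ := by
      rw [Ideal.map_le_iff_le_comap]
      intro x hx
      show algebraMap S (T ⧸ m) x ∈ (⊥ : Ideal (T ⧸ m))
      have hax : algebraMap S (T ⧸ m) x = Ideal.Quotient.mk m (algebraMap S T x) :=
        (IsScalarTower.algebraMap_apply S T (T ⧸ m) x)
      rw [hax, Ideal.mem_bot, Ideal.Quotient.eq_zero_iff_mem]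
      exact hpm (Ideal.mem_map_of_mem _ hx)
    rw [h1] at h2
    haveI : Nontrivial (T ⧸ m) := Ideal.Quotient.nontrivial_iff.mpr hm.ne_top
    exact top_ne_bot (le_bot_iff.mp h2)
end

section
/- Let k be a field of characteristic zero, k[X_1, …, X_n] a polynomial ring, and f_1, …, f_n ∈ k[X_1, …, X_n] with Jacobian determinant det(∂f_i/∂X_j) a nonzero element of k. Then k[X_1, …, X_n] is unramified over the subring k[f_1, …, f_n], and f_1, …, f_n are algebraically independent over k. -/
/-!
Write `T = k[X₁, …, Xₙ]`, `S = k[f₁, …, fₙ]` and `J` for the Jacobian matrix. In `Ω_{T/S}` every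
`dfᵢ = Σⱼ Jᵢⱼ dXⱼ` vanishes; as `J` is invertible, so does every `dXⱼ`, and these generate
`Ω_{T/S}`. For algebraic independence, the chain rule `∂ⱼ(p(f)) = Σᵢ (∂ᵢp)(f) Jᵢⱼ` and the
invertibility of `Jᵀ` show that the kernel of `p ↦ p(f)` is a proper ideal stable under all `∂ᵢ`.
In characteristic zero such an ideal is zero: an element of minimal degree has all its partial
derivatives in the ideal and of smaller degree, hence zero, so it is a constant, hence zero.
-/

open MvPolynomial

theorem Matrix.eq_zero_of_isUnit_det_of_forall_sum_smul_eq_zero {ι R M : Type*} [Fintype ι]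
    [DecidableEq ι] [CommRing R] [AddCommGroup M] [Module R M] {J : Matrix ι ι R}
    (hJ : IsUnit J.det) {v : ι → M} (h : ∀ i, ∑ j, J i j • v j = 0) : v = 0 := by
  funext l
  have hdet : J.det • v l = 0 :=
    calc J.det • v l = ∑ j, (J.adjugate * J) l j • v j := by
          simp [Matrix.adjugate_mul, Matrix.one_apply]
      _ = ∑ i, J.adjugate l i • ∑ j, J i j • v j := by
          simp only [Matrix.mul_apply, Finset.sum_smul, Finset.smul_sum, mul_smul]
          exact Finset.sum_comm
      _ = 0 := by simp [h]
  simpa using hJ.smul_left_cancel.mp (hdet.trans (smul_zero _).symm)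

theorem Derivation.map_aeval_eq_sum_pderiv {R A M σ : Type*} [CommSemiring R] [CommSemiring A]
    [Algebra R A] [AddCommMonoid M] [Module A M] [Module R M] [IsScalarTower R A M] [Fintype σ]
    (D : Derivation R A M) (f : σ → A) (p : MvPolynomial σ R) :
    D (aeval f p) = ∑ i, aeval f (pderiv i p) • D (f i) := by
  classical
  induction p using MvPolynomial.induction_on with
  | C a => simp
  | add p q hp hq => simp only [map_add, hp, hq, add_smul, Finset.sum_add_distrib]
  | mul_X p s hp =>
    simp [Derivation.leibniz, hp, pderiv_X, Pi.single_apply, add_smul, mul_smul, Finset.smul_sum,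
      apply_ite, ite_smul, Finset.sum_add_distrib]

theorem KaehlerDifferential.subsingleton_of_forall_D_eq_zero {R S : Type*} [CommRing R]
    [CommRing S] [Algebra R S] (h : ∀ x, D R S x = 0) : Subsingleton Ω[S⁄R] := by
  suffices (⊤ : Submodule S Ω[S⁄R]) ≤ ⊥ from
    (subsingleton_iff_forall_eq 0).mpr fun y ↦ this trivial
  rw [← KaehlerDifferential.span_range_derivation, Submodule.span_le]
  rintro _ ⟨x, rfl⟩
  simp [h]

namespace MvPolynomial

theorem eq_C_of_forall_pderiv_eq_zero {R σ : Type*} [CommSemiring R] [IsAddTorsionFree R]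
    {p : MvPolynomial σ R} (h : ∀ i, pderiv i p = 0) : p = C (coeff 0 p) := by
  classical
  ext m
  rcases eq_or_ne m 0 with rfl | hm
  · simp
  rw [coeff_C, if_neg (Ne.symm hm)]
  obtain ⟨i, hi⟩ : ∃ i, m i ≠ 0 := by simpa [Finsupp.ext_iff] using hm
  have hi' : Finsupp.single i 1 ≤ m := Finsupp.single_le_iff.mpr (Nat.one_le_iff_ne_zero.mpr hi)
  have key := coeff_pderiv (i := i) p (m - Finsupp.single i 1)
  have hmi : (((m - Finsupp.single i 1 : σ →₀ ℕ) i : ℕ) : R) + 1 = m i := by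
    rw [Finsupp.tsub_apply, Finsupp.single_eq_same, ← Nat.cast_add_one,
      Nat.sub_add_cancel (Nat.one_le_iff_ne_zero.mpr hi)]
  rw [h i, coeff_zero, hmi, tsub_add_cancel_of_le hi', mul_comm, ← nsmul_eq_mul] at key
  exact (nsmul_eq_zero_iff_right hi).mp key.symm

theorem totalDegree_pderiv_lt {R σ : Type*} [CommSemiring R] {p : MvPolynomial σ R} {i : σ}
    (h : pderiv i p ≠ 0) : (pderiv i p).totalDegree < p.totalDegree := by
  have key : ∀ m ∈ (pderiv i p).support, (m.sum fun _ e => e) + 1 ≤ p.totalDegree := by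
    intro m hm
    have hc : coeff (m + Finsupp.single i 1) p ≠ 0 := by
      intro hc
      simp [mem_support_iff, coeff_pderiv, hc] at hm
    have hdeg := le_totalDegree (mem_support_iff.mpr hc)
    rwa [Finsupp.sum_add_index' (by simp) (by simp), Finsupp.sum_single_index rfl] at hdeg
  obtain ⟨m, hm⟩ := support_nonempty.mpr h
  have := key m hm
  have : (pderiv i p).totalDegree ≤ p.totalDegree - 1 :=
    Finset.sup_le fun m hm => Nat.le_sub_one_of_lt (key m hm)
  omega

theorem eq_bot_of_forall_pderiv_mem {k σ : Type*} [Field k] [CharZero k]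
    {I : Ideal (MvPolynomial σ k)} (hI : I ≠ ⊤) (h : ∀ p ∈ I, ∀ i, pderiv i p ∈ I) : I = ⊥ := by
  refine (Submodule.eq_bot_iff I).mpr fun p hp => ?_
  induction hd : p.totalDegree using Nat.strong_induction_on generalizing p with
  | _ d IH =>
    have hpderiv : ∀ i, pderiv i p = 0 := fun i => by
      by_contra hne
      exact hne (IH _ (hd ▸ totalDegree_pderiv_lt hne) _ (h p hp i) rfl)
    rw [eq_C_of_forall_pderiv_eq_zero hpderiv] at hp ⊢
    by_contra hc
    exact hI (Ideal.eq_top_of_isUnit_mem _ hp ((isUnit_iff_ne_zero.mpr (by simpa using hc)).map C))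

noncomputable def jacobian {R σ ι : Type*} [CommSemiring R] (f : ι → MvPolynomial σ R) :
    Matrix ι σ (MvPolynomial σ R) :=
  Matrix.of fun i j => pderiv j (f i)

@[simp]
theorem jacobian_apply {R σ ι : Type*} [CommSemiring R] (f : ι → MvPolynomial σ R) (i : ι)
    (j : σ) : jacobian f i j = pderiv j (f i) :=
  rfl

variable {σ : Type*} [Fintype σ] [DecidableEq σ]

theorem formallyUnramified_adjoin_of_isUnit_det_jacobian {k : Type*} [CommRing k]
    {f : σ → MvPolynomial σ k} (hJ : IsUnit (jacobian f).det) :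
    Algebra.FormallyUnramified (Algebra.adjoin k (Set.range f)) (MvPolynomial σ k) := by
  set S := Algebra.adjoin k (Set.range f)
  let D := (KaehlerDifferential.D S (MvPolynomial σ k)).restrictScalars k
  have hD : ∀ p, D p = ∑ j, pderiv j p • D (X j) := fun p => by
    simpa using D.map_aeval_eq_sum_pderiv X p
  have hDX : ∀ j, D (X j) = 0 := by
    refine congrFun (Matrix.eq_zero_of_isUnit_det_of_forall_sum_smul_eq_zero hJ fun i => ?_)
    simp only [jacobian_apply]
    rw [← hD (f i)]
    exact (KaehlerDifferential.D S _).map_algebraMap ⟨f i, Algebra.subset_adjoin ⟨i, rfl⟩⟩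
  refine ⟨KaehlerDifferential.subsingleton_of_forall_D_eq_zero fun p => ?_⟩
  change D p = 0
  simp [hD p, hDX]

theorem algebraicIndependent_of_isUnit_det_jacobian {k : Type*} [Field k] [CharZero k]
    {f : σ → MvPolynomial σ k} (hJ : IsUnit (jacobian f).det) : AlgebraicIndependent k f := by
  rw [algebraicIndependent_iff_injective_aeval, RingHom.injective_iff_ker_eq_bot]
  refine eq_bot_of_forall_pderiv_mem (RingHom.ker_ne_top _) fun p hp i => ?_
  have hJt : IsUnit (jacobian f).transpose.det := by rwa [Matrix.det_transpose]
  have hpderiv := Matrix.eq_zero_of_isUnit_det_of_forall_sum_smul_eq_zero hJt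
    (v := fun i => aeval f (pderiv i p)) fun j => by
      have hchain := (pderiv j).map_aeval_eq_sum_pderiv f p
      rw [RingHom.mem_ker.mp hp, map_zero] at hchain
      simp [hchain, mul_comm]
  exact RingHom.mem_ker.mpr (congrFun hpderiv i)

end MvPolynomial

theorem stmt_17 (k : Type*) [Field k] [CharZero k] (n : ℕ)
    (f : Fin n → MvPolynomial (Fin n) k)
    (hjac : ∃ c : k, c ≠ 0 ∧
      (Matrix.of fun i j => MvPolynomial.pderiv j (f i)).det = MvPolynomial.C c) :
    Algebra.Unramified (Algebra.adjoin k (Set.range f)) (MvPolynomial (Fin n) k) ∧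
    AlgebraicIndependent k f := by
  obtain ⟨c, hc, hdet⟩ := hjac
  have hJ : IsUnit (jacobian f).det := hdet ▸ (isUnit_iff_ne_zero.mpr hc).map C
  exact ⟨⟨formallyUnramified_adjoin_of_isUnit_det_jacobian hJ,
    .of_restrictScalars_finiteType k _ _⟩, algebraicIndependent_of_isUnit_det_jacobian hJ⟩
end

section
/- Let k be a field of characteristic zero with algebraic closure k', and let f_1, …, f_n ∈ k[X_1, …, X_n]. If k'[f_1, …, f_n] = k'[X_1, …, X_n], then k[f_1, …, f_n] = k[X_1, …, X_n]. -/
open MvPolynomial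

noncomputable def projMap {k K : Type*} [CommSemiring k] [CommSemiring K] [Module k K] {σ : Type*}
    (π : K →ₗ[k] k) (x : MvPolynomial σ K) : MvPolynomial σ k :=
  ∑ m ∈ x.support, MvPolynomial.monomial m (π (x.coeff m))

lemma coeff_projMap {k K : Type*} [CommSemiring k] [CommSemiring K] [Module k K] {σ : Type*}
    (π : K →ₗ[k] k) (x : MvPolynomial σ K) (m : σ →₀ ℕ) :
    (projMap π x).coeff m = π (x.coeff m) := by
  classical
  rw [projMap, MvPolynomial.coeff_sum]
  simp only [MvPolynomial.coeff_monomial]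
  rw [Finset.sum_ite_eq' x.support m (fun m' => π (x.coeff m'))]
  by_cases h : m ∈ x.support
  · simp [h]
  · simp [h, MvPolynomial.notMem_support_iff.mp h]

theorem stmt_18 (k : Type*) [Field k] [CharZero k] (n : ℕ)
    (f : Fin n → MvPolynomial (Fin n) k)
    (h : Algebra.adjoin (AlgebraicClosure k)
      (Set.range fun i =>
        MvPolynomial.map (algebraMap k (AlgebraicClosure k)) (f i)) = ⊤) :
    Algebra.adjoin k (Set.range f) = ⊤ := by
  classical
  set K := AlgebraicClosure k with hKdef
  set φ : MvPolynomial (Fin n) k →+* MvPolynomial (Fin n) K :=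
    MvPolynomial.map (algebraMap k K) with hφ
  set A := Algebra.adjoin k (Set.range f) with hA
  rw [eq_top_iff]
  rintro p -
  -- membership of φ p in the span over K
  have hmem : φ p ∈ Submodule.span K
      ((Submonoid.closure (Set.range fun i => φ (f i)) : Submonoid (MvPolynomial (Fin n) K)) : Set (MvPolynomial (Fin n) K)) := by
    rw [← Algebra.adjoin_eq_span, h]
    trivial
  -- key claim via span induction
  have key : ∀ x ∈ Submodule.span K
      ((Submonoid.closure (Set.range fun i => φ (f i)) : Submonoid (MvPolynomial (Fin n) K)) : Set (MvPolynomial (Fin n) K)),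
      ∀ π : K →ₗ[k] k, projMap π x ∈ A := by
    intro x hx
    induction hx using Submodule.span_induction with
    | mem t ht =>
      intro π
      -- t = φ m for some m in the monoid closure of range f
      have : (Set.range fun i => φ (f i)) = φ '' Set.range f := by
        rw [← Set.range_comp]; rfl
      rw [this, ← MonoidHom.map_mclosure] at ht
      obtain ⟨m, hm, rfl⟩ := ht
      have hmA : m ∈ A := by
        have := Submonoid.closure_le.mpr
          (show Set.range f ⊆ (A.toSubmonoid : Set (MvPolynomial (Fin n) k)) from
            Algebra.subset_adjoin) hm
        exact this
      have : projMap π (φ m) = π 1 • m := by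
        apply MvPolynomial.ext
        intro mm
        rw [coeff_projMap, MvPolynomial.coeff_smul]
        show π ((MvPolynomial.map (algebraMap k K) m).coeff mm) = _
        rw [MvPolynomial.coeff_map]
        rw [Algebra.algebraMap_eq_smul_one, map_smul, smul_eq_mul, smul_eq_mul, mul_comm]
      rw [this]
      exact A.toSubmodule.smul_mem _ hmA
    | zero =>
      intro π
      have : projMap π (0 : MvPolynomial (Fin n) K) = 0 := by
        apply MvPolynomial.ext; intro mm; simp [coeff_projMap]
      rw [this]; exact A.zero_mem
    | add x y hx hy ihx ihy =>
      intro π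
      have : projMap π (x + y) = projMap π x + projMap π y := by
        apply MvPolynomial.ext; intro mm; simp [coeff_projMap]
      rw [this]; exact A.add_mem (ihx π) (ihy π)
    | smul c x hx ih =>
      intro π
      have : projMap π (c • x) = projMap (π ∘ₗ LinearMap.mulLeft k c) x := by
        apply MvPolynomial.ext; intro mm
        simp [coeff_projMap, MvPolynomial.coeff_smul, smul_eq_mul]
      rw [this]; exact ih _
  -- a k-linear retraction of algebraMap k K
  obtain ⟨π₀, hπ₀⟩ := (Algebra.linearMap k K).exists_leftInverse_of_injective
    (LinearMap.ker_eq_bot.mpr (algebraMap k K).injective)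
  have : projMap π₀ (φ p) = p := by
    apply MvPolynomial.ext
    intro mm
    rw [coeff_projMap]
    show π₀ ((MvPolynomial.map (algebraMap k K) p).coeff mm) = _
    rw [MvPolynomial.coeff_map]
    exact congrFun (congrArg (fun g => g.toFun) hπ₀) (p.coeff mm)
  rw [← this]
  exact key _ hmem π₀
end

section
/- Let A be an integral domain whose quotient field has characteristic zero, and let f_1, …, f_n be elements of the polynomial ring A[X_1, …, X_n] whose Jacobian determinant det(∂f_i/∂X_j) is a unit in A. If K(A)[X_1, …, X_n] = K(A)[f_1, …, f_n], then A[X_1, …, X_n] = A[f_1, …, f_n]. -/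
/-!
Because the linear part of `f` at the origin has unit determinant, an affine change of the
`f i` over `A` makes `f i ≡ X i` modulo `(X)²` without changing `A[f]` or `K[f]`. Substituting
`X ↦ f` then maps `(X)^d` into itself and is the identity modulo `(X)^(d+1)`. So if
`X i = P(f)` with `P` over `K`, induction on `d` shows that `P` is congruent modulo `(X)^d` to
a polynomial over `A`: if `P - q ∈ (X)^d`, then `(P - q)(f)` has coefficients in `A` and
agrees with `P - q` in degree `d`.
-/

open MvPolynomial Matrix

theorem Ideal.apply_sub_self_mem_span_pow_succ {S : Type*} [CommRing S] {s : Set S}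
    {ψ : S →+* S} (h0 : ∀ r, ψ r - r ∈ Ideal.span s)
    (hs : ∀ a ∈ s, ψ a - a ∈ Ideal.span s ^ 2) {d : ℕ} {r : S}
    (hr : r ∈ Ideal.span s ^ d) :
    ψ r - r ∈ Ideal.span s ^ (d + 1) := by
  set I := Ideal.span s
  have hmul (u v : S) : ψ (u * v) - u * v = ψ u * (ψ v - v) + (ψ u - u) * v := by
    rw [map_mul]; ring
  have h1 : ∀ v ∈ I, ψ v - v ∈ I ^ 2 := by
    intro v hv
    induction hv using Submodule.span_induction with
    | mem a ha => exact hs a ha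
    | zero => simp
    | add x y _ _ hx hy => rw [map_add, add_sub_add_comm]; exact add_mem hx hy
    | smul a x hx ihx =>
      rw [smul_eq_mul, hmul]
      exact add_mem (Ideal.mul_mem_left _ _ ihx) (sq I ▸ Ideal.mul_mem_mul (h0 a) hx)
  induction d generalizing r with
  | zero => simpa using h0 r
  | succ d ih =>
    rw [pow_succ] at hr
    refine Submodule.mul_induction_on hr (fun u hu v hv => ?_) fun x y hx hy => ?_
    · have hψu : ψ u ∈ I ^ d := by
        simpa using add_mem hu (Ideal.pow_le_pow_right d.le_succ (ih hu))
      rw [hmul, pow_succ]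
      refine add_mem ?_ (Ideal.mul_mem_mul (ih hu) hv)
      rw [pow_succ, mul_assoc, ← sq]
      exact Ideal.mul_mem_mul hψu (h1 v hv)
    · rw [map_add, add_sub_add_comm]; exact add_mem hx hy

theorem Finsupp.degree_eq_one_iff {σ : Type*} {β : σ →₀ ℕ} :
    β.degree = 1 ↔ ∃ k, β = Finsupp.single k 1 := by
  classical
  refine ⟨fun h => ?_, by rintro ⟨k, rfl⟩; exact Finsupp.degree_single k 1⟩
  have hcard : Multiset.card (Finsupp.toMultiset β) = 1 := by
    rw [Finsupp.card_toMultiset]; exact h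
  obtain ⟨k, hk⟩ := Multiset.card_eq_one.1 hcard
  exact ⟨k, by rw [← Finsupp.toMultiset_toFinsupp β, hk, Multiset.toFinsupp_singleton]⟩

theorem Subalgebra.mulVec_map_algebraMap_mem {R S ι κ : Type*} [CommSemiring R] [CommSemiring S]
    [Algebra R S] [Fintype κ] (T : Subalgebra R S) (B : Matrix ι κ R) {v : κ → S}
    (hv : ∀ j, v j ∈ T) (i : ι) : (B.map (algebraMap R S) *ᵥ v) i ∈ T :=
  T.sum_mem fun j _ => T.mul_mem (T.algebraMap_mem _) (hv j)

namespace MvPolynomial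

variable {σ R S : Type*} [CommRing R] [CommRing S]

theorem sub_mem_idealOfVars_sq {p q : MvPolynomial σ R}
    (h0 : constantCoeff p = constantCoeff q)
    (h1 : ∀ k, coeff (Finsupp.single k 1) p = coeff (Finsupp.single k 1) q) :
    p - q ∈ idealOfVars σ R ^ 2 := by
  refine (mem_pow_idealOfVars_iff' 2 _).2 fun β hβ => ?_
  rw [coeff_sub, sub_eq_zero]
  obtain hβ | hβ : β.degree = 0 ∨ β.degree = 1 := by omega
  · rw [Finsupp.degree_eq_zero_iff] at hβ
    simpa [hβ, constantCoeff_eq] using h0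
  · obtain ⟨k, rfl⟩ := Finsupp.degree_eq_one_iff.1 hβ
    exact h1 k

theorem map_mem_pow_idealOfVars (φ : R →+* S) {d : ℕ} {p : MvPolynomial σ R}
    (hp : p ∈ idealOfVars σ R ^ d) : map φ p ∈ idealOfVars σ S ^ d := by
  rw [mem_pow_idealOfVars_iff'] at hp ⊢
  intro β hβ
  rw [coeff_map, hp β hβ, map_zero]

theorem aeval_sub_self_mem_pow_succ {x : σ → MvPolynomial σ R}
    (hx : ∀ i, x i - X i ∈ idealOfVars σ R ^ 2) {d : ℕ} {p : MvPolynomial σ R}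
    (hp : p ∈ idealOfVars σ R ^ d) : aeval x p - p ∈ idealOfVars σ R ^ (d + 1) := by
  have hx1 i : x i - X i ∈ idealOfVars σ R := Ideal.pow_le_self two_ne_zero (hx i)
  have hquot : (Ideal.Quotient.mkₐ R (idealOfVars σ R)).comp (aeval x) =
      Ideal.Quotient.mkₐ R (idealOfVars σ R) :=
    algHom_ext fun i => by
      simp only [AlgHom.comp_apply, aeval_X]; exact Ideal.Quotient.eq.2 (hx1 i)
  refine Ideal.apply_sub_self_mem_span_pow_succ (ψ := (aeval x).toRingHom) (fun r => ?_)
    (by rintro _ ⟨i, rfl⟩; simpa using hx i) hp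
  rw [← Ideal.Quotient.eq]
  exact AlgHom.congr_fun hquot r

theorem map_aeval_eq_aeval_map {τ : Type*} (φ : R →+* S) (g : τ → MvPolynomial σ R)
    (q : MvPolynomial τ R) : map φ (aeval g q) = aeval (fun i => map φ (g i)) (map φ q) := by
  rw [map_aeval, coe_eval₂Hom, aeval_def, eval₂_map, algebraMap_eq, algebraMap_eq, map_comp_C]

theorem map_mem_adjoin_range_map {ι : Type*} (φ : R →+* S) {g : ι → MvPolynomial σ R}
    {p : MvPolynomial σ R} (hp : p ∈ Algebra.adjoin R (Set.range g)) :
    map φ p ∈ Algebra.adjoin S (Set.range fun i => map φ (g i)) := by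
  rw [← aeval_range] at hp ⊢
  obtain ⟨q, rfl⟩ := (AlgHom.mem_range _).1 hp
  exact (AlgHom.mem_range _).2 ⟨map φ q, (map_aeval_eq_aeval_map φ g q).symm⟩

theorem exists_sub_map_mem_pow_succ {φ : R →+* S} {d : ℕ} {p : MvPolynomial σ S}
    (hp : p ∈ idealOfVars σ S ^ d)
    (hcoeff : ∀ β : σ →₀ ℕ, β.degree = d → coeff β p ∈ Set.range φ) :
    ∃ q, p - map φ q ∈ idealOfVars σ S ^ (d + 1) := by
  obtain ⟨q, hq⟩ : homogeneousComponent d p ∈ Set.range (map φ) := by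
    rw [mem_range_map_iff_coeffs_subset]
    intro c hc
    obtain ⟨β, hβ, rfl⟩ := mem_coeffs_iff.1 hc
    rw [coeff_homogeneousComponent]
    split_ifs with hdeg
    · exact hcoeff β hdeg
    · exact ⟨0, map_zero φ⟩
  refine ⟨q, (mem_pow_idealOfVars_iff' _ _).2 fun β hβ => ?_⟩
  rw [hq, coeff_sub, coeff_homogeneousComponent]
  split_ifs with hdeg
  · exact sub_self _
  · rw [(mem_pow_idealOfVars_iff' _ _).1 hp β (by omega), sub_zero]

section Descent

variable {φ : R →+* S} {g : σ → MvPolynomial σ R}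

theorem exists_sub_map_mem_pow_idealOfVars (hg : ∀ i, g i - X i ∈ idealOfVars σ R ^ 2)
    {P : MvPolynomial σ S} (hP : aeval (fun i => map φ (g i)) P ∈ Set.range (map φ))
    (d : ℕ) : ∃ q, P - map φ q ∈ idealOfVars σ S ^ d := by
  induction d with
  | zero => exact ⟨0, by simp⟩
  | succ d ih =>
    obtain ⟨q, hq⟩ := ih
    set ψ := aeval (R := S) fun i => map φ (g i)
    have hψ : ψ (P - map φ q) ∈ Set.range (map φ) := by
      obtain ⟨r, hr⟩ := hP
      exact ⟨r - aeval g q, by rw [map_sub, hr, map_sub, map_aeval_eq_aeval_map]⟩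
    have hψ_sub : ψ (P - map φ q) - (P - map φ q) ∈ idealOfVars σ S ^ (d + 1) :=
      aeval_sub_self_mem_pow_succ (fun i => by simpa using map_mem_pow_idealOfVars φ (hg i)) hq
    obtain ⟨q', hq'⟩ := exists_sub_map_mem_pow_succ (φ := φ) hq fun β hβ => by
      have := (mem_pow_idealOfVars_iff' _ _).1 hψ_sub β (by omega)
      rw [coeff_sub, sub_eq_zero] at this
      obtain ⟨r, hr⟩ := hψ
      exact ⟨coeff β r, by rw [← this, ← hr, coeff_map]⟩
    exact ⟨q + q', by rwa [map_add, ← sub_sub]⟩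

theorem mem_range_map_of_aeval_mem_range_map (hg : ∀ i, g i - X i ∈ idealOfVars σ R ^ 2)
    {P : MvPolynomial σ S} (hP : aeval (fun i => map φ (g i)) P ∈ Set.range (map φ)) :
    P ∈ Set.range (map φ) := by
  rw [mem_range_map_iff_coeffs_subset]
  intro c hc
  obtain ⟨β, -, rfl⟩ := mem_coeffs_iff.1 hc
  obtain ⟨q, hq⟩ := exists_sub_map_mem_pow_idealOfVars hg hP (β.degree + 1)
  have := (mem_pow_idealOfVars_iff' _ _).1 hq β (lt_add_one _)
  rw [coeff_sub, coeff_map, sub_eq_zero] at this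
  exact ⟨_, this.symm⟩

theorem adjoin_range_eq_top_of_adjoin_range_map (hφ : Function.Injective φ)
    (hg : ∀ i, g i - X i ∈ idealOfVars σ R ^ 2)
    (h : Algebra.adjoin S (Set.range fun i => map φ (g i)) = ⊤) :
    Algebra.adjoin R (Set.range g) = ⊤ := by
  rw [eq_top_iff, ← adjoin_range_X, Algebra.adjoin_le_iff]
  rintro _ ⟨i, rfl⟩
  have hXi : X i ∈ (aeval (R := S) fun i => map φ (g i)).range := by
    rw [aeval_range, h]; trivial
  obtain ⟨P, hP⟩ := (AlgHom.mem_range _).1 hXi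
  obtain ⟨q, hq⟩ := mem_range_map_of_aeval_mem_range_map hg ⟨X i, by rw [hP, map_X]⟩
  rw [← aeval_range]
  refine (AlgHom.mem_range _).2 ⟨q, map_injective φ hφ ?_⟩
  rw [map_aeval_eq_aeval_map, hq, hP, map_X]

end Descent

noncomputable def linearPart {ι : Type*} (f : ι → MvPolynomial σ R) : Matrix ι σ R :=
  Matrix.of fun i j => coeff (Finsupp.single j 1) (f i)

theorem linearPart_apply {ι : Type*} (f : ι → MvPolynomial σ R) (i : ι) (j : σ) :
    linearPart f i j = coeff (Finsupp.single j 1) (f i) :=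
  rfl

theorem constantCoeff_pderiv (j : σ) (p : MvPolynomial σ R) :
    constantCoeff (pderiv j p) = coeff (Finsupp.single j 1) p := by
  simp [constantCoeff_eq, coeff_pderiv]

section Normalization

variable [Fintype σ] [DecidableEq σ]

theorem det_linearPart (f : σ → MvPolynomial σ R) :
    (linearPart f).det = constantCoeff (Matrix.of fun i j => pderiv j (f i)).det := by
  rw [RingHom.map_det]
  congr 1
  ext i j
  simp [linearPart, constantCoeff_pderiv]

noncomputable def normalizeAtOrigin (f : σ → MvPolynomial σ R) : σ → MvPolynomial σ R :=
  (linearPart f)⁻¹.map C *ᵥ fun j => f j - C (constantCoeff (f j))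

variable {f : σ → MvPolynomial σ R}

theorem normalizeAtOrigin_sub_X_mem (hf : IsUnit (linearPart f).det) (i : σ) :
    normalizeAtOrigin f i - X i ∈ idealOfVars σ R ^ 2 := by
  apply sub_mem_idealOfVars_sq
  · simp [normalizeAtOrigin, Matrix.mulVec, dotProduct]
  · intro k
    have hinv := congr_fun₂ (Matrix.nonsing_inv_mul _ hf) i k
    simp only [Matrix.mul_apply, linearPart_apply] at hinv
    have hk : (0 : σ →₀ ℕ) ≠ Finsupp.single k 1 :=
      (Finsupp.single_ne_zero.2 one_ne_zero).symm
    simpa [normalizeAtOrigin, Matrix.mulVec, dotProduct, coeff_sum, coeff_C_mul, coeff_X,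
      Matrix.one_apply, Finsupp.single_left_inj, hk] using hinv

theorem adjoin_range_normalizeAtOrigin (hf : IsUnit (linearPart f).det) :
    Algebra.adjoin R (Set.range (normalizeAtOrigin f)) = Algebra.adjoin R (Set.range f) := by
  have hf_sub : (linearPart f).map C *ᵥ normalizeAtOrigin f =
      fun j => f j - C (constantCoeff (f j)) := by
    rw [normalizeAtOrigin, Matrix.mulVec_mulVec, ← Matrix.map_mul, Matrix.mul_nonsing_inv _ hf,
      Matrix.map_one _ (map_zero C) (map_one C), Matrix.one_mulVec]
  apply le_antisymm <;> rw [Algebra.adjoin_le_iff] <;> rintro _ ⟨j, rfl⟩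
  · refine Subalgebra.mulVec_map_algebraMap_mem _ _ (fun i => ?_) j
    exact sub_mem (Algebra.subset_adjoin ⟨i, rfl⟩) (Subalgebra.algebraMap_mem _ _)
  · have := Subalgebra.mulVec_map_algebraMap_mem
      (Algebra.adjoin R (Set.range (normalizeAtOrigin f))) (linearPart f)
      (fun i => Algebra.subset_adjoin ⟨i, rfl⟩) j
    rw [algebraMap_eq, hf_sub] at this
    simpa using add_mem this (Subalgebra.algebraMap_mem _ (constantCoeff (f j)))

end Normalization

end MvPolynomial

theorem stmt_19_general (A : Type*) [CommRing A] (n : ℕ)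
    (f : Fin n → MvPolynomial (Fin n) A)
    (hjac : ∃ u : Aˣ,
      (Matrix.of fun i j => MvPolynomial.pderiv j (f i)).det = MvPolynomial.C (u : A))
    (h : Algebra.adjoin (FractionRing A)
      (Set.range fun i =>
        MvPolynomial.map (algebraMap A (FractionRing A)) (f i)) = ⊤) :
    Algebra.adjoin A (Set.range f) = ⊤ := by
  obtain ⟨u, hu⟩ := hjac
  have hf : IsUnit (linearPart f).det := by
    rw [det_linearPart, hu, constantCoeff_C]
    exact u.isUnit
  rw [← adjoin_range_normalizeAtOrigin hf]
  refine adjoin_range_eq_top_of_adjoin_range_map (IsFractionRing.injective A (FractionRing A))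
    (normalizeAtOrigin_sub_X_mem hf) ?_
  rw [eq_top_iff, ← h, Algebra.adjoin_le_iff]
  rintro _ ⟨j, rfl⟩
  refine map_mem_adjoin_range_map _ ?_
  rw [adjoin_range_normalizeAtOrigin hf]
  exact Algebra.subset_adjoin ⟨j, rfl⟩

theorem stmt_19 (A : Type*) [CommRing A] [IsDomain A]
    [CharZero (FractionRing A)] (n : ℕ)
    (f : Fin n → MvPolynomial (Fin n) A)
    (hjac : ∃ u : Aˣ,
      (Matrix.of fun i j => MvPolynomial.pderiv j (f i)).det = MvPolynomial.C (u : A))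
    (h : Algebra.adjoin (FractionRing A)
      (Set.range fun i =>
        MvPolynomial.map (algebraMap A (FractionRing A)) (f i)) = ⊤) :
    Algebra.adjoin A (Set.range f) = ⊤ :=
  stmt_19_general A n f hjac h
end
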